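/- arXiv:1402.3388 — 4 statements merged into one kernel-verified Lean document; each statement's English description precedes it below -/
import Mathlib

section
/- For every G-free LTL formula φ and every infinite word w, w satisfies FGφ if and only if for almost every i ∈ ℕ (all but finitely many i) there exists j ≥ i such that af(φ, w[i..j]) is propositionally equivalent to tt. -/
namespace LTLF

/-- LTL formulas in negation normal form over atomic propositions `Ap`. -/
inductive LTL (Ap : Type) : Type
  | tt : LTL Ap
  | ff : LTL Ap
  | atom : Ap → LTL Ap
  | natom : Ap → LTL Ap
  | and : LTL Ap → LTL Ap → LTL Ap
  | or : LTL Ap → LTL Ap → LTL Ap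
  | next : LTL Ap → LTL Ap
  | fut : LTL Ap → LTL Ap
  | glob : LTL Ap → LTL Ap
  | untl : LTL Ap → LTL Ap → LTL Ap

variable {Ap : Type}

/-- Infinite words over the alphabet `2^Ap`. -/
abbrev Word (Ap : Type) := ℕ → Set Ap

/-- The suffix `w_k`. -/
def suffix (w : Word Ap) (k : ℕ) : Word Ap := fun i => w (i + k)

/-- Standard LTL semantics on infinite words. -/
def Sat : LTL Ap → Word Ap → Prop
  | .tt, _ => True
  | .ff, _ => False
  | .atom a, w => a ∈ w 0
  | .natom a, w => a ∉ w 0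
  | .and φ ψ, w => Sat φ w ∧ Sat ψ w
  | .or φ ψ, w => Sat φ w ∨ Sat ψ w
  | .next φ, w => Sat φ (suffix w 1)
  | .fut φ, w => ∃ k, Sat φ (suffix w k)
  | .glob φ, w => ∀ k, Sat φ (suffix w k)
  | .untl φ ψ, w => ∃ k, Sat ψ (suffix w k) ∧ ∀ j < k, Sat φ (suffix w j)

open Classical in
/-- The "after function" `af(φ, ν)`. -/
noncomputable def af : LTL Ap → Set Ap → LTL Ap
  | .tt, _ => .tt
  | .ff, _ => .ff
  | .atom a, ν => if a ∈ ν then .tt else .ff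
  | .natom a, ν => if a ∈ ν then .ff else .tt
  | .and φ ψ, ν => .and (af φ ν) (af ψ ν)
  | .or φ ψ, ν => .or (af φ ν) (af ψ ν)
  | .next φ, _ => φ
  | .fut φ, ν => .or (af φ ν) (.fut φ)
  | .glob φ, ν => .and (af φ ν) (.glob φ)
  | .untl φ ψ, ν => .or (af ψ ν) (.and (af φ ν) (.untl φ ψ))

/-- `af` extended to finite words. -/
noncomputable def afw (φ : LTL Ap) (u : List (Set Ap)) : LTL Ap := u.foldl af φ

open Classical in
/-- The variant `afG`, identical to `af` except `afG(Gφ, ν) = Gφ`. -/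
noncomputable def afG : LTL Ap → Set Ap → LTL Ap
  | .tt, _ => .tt
  | .ff, _ => .ff
  | .atom a, ν => if a ∈ ν then .tt else .ff
  | .natom a, ν => if a ∈ ν then .ff else .tt
  | .and φ ψ, ν => .and (afG φ ν) (afG ψ ν)
  | .or φ ψ, ν => .or (afG φ ν) (afG ψ ν)
  | .next φ, _ => φ
  | .fut φ, ν => .or (afG φ ν) (.fut φ)
  | .glob φ, _ => .glob φ
  | .untl φ ψ, ν => .or (afG ψ ν) (.and (afG φ ν) (.untl φ ψ))

/-- `afG` extended to finite words. -/
noncomputable def afGw (φ : LTL Ap) (u : List (Set Ap)) : LTL Ap := u.foldl afG φ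

/-- The finite infix `w[i..j] = w[i] w[i+1] ⋯ w[j]`. -/
def infixW (w : Word Ap) (i j : ℕ) : List (Set Ap) :=
  (List.range (j + 1 - i)).map (fun k => w (i + k))

/-- The finite prefix `w[0..i]`. -/
def prefixW (w : Word Ap) (i : ℕ) : List (Set Ap) := infixW w 0 i

/-- Concatenation of a finite word with an infinite word. -/
def cat (u : List (Set Ap)) (w : Word Ap) : Word Ap :=
  fun k => if h : k < u.length then u.get ⟨k, h⟩ else w (k - u.length)

/-- Propositional evaluation of a formula under a valuation `v`, treating
literals and temporal formulas (`X`, `F`, `G`, `U`) as opaque propositional atoms. -/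
def propSat (v : LTL Ap → Prop) : LTL Ap → Prop
  | .tt => True
  | .ff => False
  | .and φ ψ => propSat v φ ∧ propSat v ψ
  | .or φ ψ => propSat v φ ∨ propSat v ψ
  | φ => v φ

/-- A valuation is consistent on literals: `a` and `¬a` get complementary values. -/
def LitConsistent (v : LTL Ap → Prop) : Prop :=
  ∀ a : Ap, v (.atom a) ↔ ¬ v (.natom a)

/-- Propositional implication `φ ⊨_p ψ`. -/
def PropImp (φ ψ : LTL Ap) : Prop :=
  ∀ v : LTL Ap → Prop, LitConsistent v → propSat v φ → propSat v ψ

/-- Propositional equivalence `φ ≡_p ψ`. -/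
def PropEquiv (φ ψ : LTL Ap) : Prop :=
  ∀ v : LTL Ap → Prop, LitConsistent v → (propSat v φ ↔ propSat v ψ)

/-- `⋀_{χ ∈ H} χ ⊨_p ψ` : the (possibly infinite) conjunction of the
hypotheses `H` propositionally implies `ψ`. -/
def PropImpSet (H : Set (LTL Ap)) (ψ : LTL Ap) : Prop :=
  ∀ v : LTL Ap → Prop, LitConsistent v → (∀ χ ∈ H, propSat v χ) → propSat v ψ

/-- The list of subformulas of a formula. -/
def subfs : LTL Ap → List (LTL Ap)
  | .tt => [.tt]
  | .ff => [.ff]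
  | .atom a => [.atom a]
  | .natom a => [.natom a]
  | .and φ ψ => .and φ ψ :: (subfs φ ++ subfs ψ)
  | .or φ ψ => .or φ ψ :: (subfs φ ++ subfs ψ)
  | .next φ => .next φ :: subfs φ
  | .fut φ => .fut φ :: subfs φ
  | .glob φ => .glob φ :: subfs φ
  | .untl φ ψ => .untl φ ψ :: (subfs φ ++ subfs ψ)

/-- `Gψ` is a `G`-subformula of `φ`. -/
def GSub (φ ψ : LTL Ap) : Prop := LTL.glob ψ ∈ subfs φ

/-- A formula is `G`-free if it contains no occurrence of `G`. -/
def GFree : LTL Ap → Prop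
  | .glob _ => False
  | .and φ ψ => GFree φ ∧ GFree ψ
  | .or φ ψ => GFree φ ∧ GFree ψ
  | .next φ => GFree φ
  | .fut φ => GFree φ
  | .untl φ ψ => GFree φ ∧ GFree ψ
  | _ => True

/-- `ind(w, ψ)`: the least index `j` with `w_j ⊨ Gψ`. -/
noncomputable def ind (w : Word Ap) (ψ : LTL Ap) : ℕ :=
  sInf {j | Sat (.glob ψ) (suffix w j)}


/-!
`af` is sound for the semantics: `w_n ⊨ af(φ, w[0..n-1])` iff `w ⊨ φ`, because `af` unfolds each
operator exactly along its one-step expansion law (`Fφ ≡ φ ∨ XFφ`, `φUψ ≡ ψ ∨ (φ ∧ X(φUψ))`). Hence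
a token that becomes a propositional tautology certifies `φ` at the position where it was placed.
Conversely, if a `G`-free `φ` holds then every `F`/`U` obligation is met after finitely many
letters, and without `G` no obligation is regenerated, so the token becomes a tautology. Thus
`FGφ`, i.e. `φ` at almost every position, is equivalent to almost every token succeeding.
-/

open Filter

/-- The prefix of length `n`; unlike `prefixW w n` (of length `n + 1`) it may be empty. -/
def takeW (w : Word Ap) (n : ℕ) : List (Set Ap) := (List.range n).map w

lemma suffix_suffix (w : Word Ap) (m n : ℕ) : suffix (suffix w m) n = suffix w (n + m) := by
  funext i
  simp only [suffix, Nat.add_assoc]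

lemma suffix_zero (w : Word Ap) : suffix w 0 = w := rfl

lemma takeW_succ (w : Word Ap) (n : ℕ) : takeW w (n + 1) = w 0 :: takeW (suffix w 1) n := by
  simp [takeW, List.range_succ_eq_map, suffix]

lemma infixW_eq_takeW (w : Word Ap) (i j : ℕ) :
    infixW w i j = takeW (suffix w i) (j + 1 - i) := by
  simp only [infixW, takeW, Nat.add_comm i]
  rfl

lemma sat_untl_iff (φ ψ : LTL Ap) (w : Word Ap) :
    Sat (.untl φ ψ) w ↔ Sat ψ w ∨ Sat φ w ∧ Sat (.untl φ ψ) (suffix w 1) := by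
  simp only [Sat, suffix_suffix]
  rw [← Nat.or_exists_add_one]
  simp only [Nat.forall_lt_succ_left, suffix_zero, Nat.not_lt_zero, IsEmpty.forall_iff,
    implies_true, and_true, and_left_comm (a := Sat ψ _), exists_and_left]

lemma sat_af_iff (φ : LTL Ap) (w : Word Ap) : Sat (af φ (w 0)) (suffix w 1) ↔ Sat φ w := by
  induction φ generalizing w with
  | tt | ff | next => rfl
  | atom a | natom a => by_cases h : a ∈ w 0 <;> simp [af, Sat, h]
  | and φ ψ ihφ ihψ => exact and_congr (ihφ w) (ihψ w)
  | or φ ψ ihφ ihψ => exact or_congr (ihφ w) (ihψ w)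
  | fut φ ih =>
    simp only [af, Sat, suffix_suffix, ih]
    exact Nat.or_exists_add_one (p := fun k => Sat φ (suffix w k))
  | glob φ ih =>
    simp only [af, Sat, suffix_suffix, ih]
    exact Nat.and_forall_add_one (p := fun k => Sat φ (suffix w k))
  | untl φ ψ ihφ ihψ =>
    rw [sat_untl_iff]
    simp only [af, Sat] at ihφ ihψ ⊢
    rw [ihφ, ihψ]

lemma sat_afw_takeW_iff (φ : LTL Ap) (w : Word Ap) (n : ℕ) :
    Sat (afw φ (takeW w n)) (suffix w n) ↔ Sat φ w := by
  induction n generalizing φ w with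
  | zero => rfl
  | succ n ih =>
    rw [takeW_succ, ← sat_af_iff φ w, ← ih _ (suffix w 1), suffix_suffix]
    rfl

lemma propSat_sat_iff (w : Word Ap) (φ : LTL Ap) : propSat (fun ψ => Sat ψ w) φ ↔ Sat φ w := by
  induction φ with
  | and φ ψ ihφ ihψ => exact and_congr ihφ ihψ
  | or φ ψ ihφ ihψ => exact or_congr ihφ ihψ
  | _ => rfl

lemma litConsistent_sat (w : Word Ap) : LitConsistent (fun ψ => Sat ψ w) :=
  fun _ => not_not.symm

lemma sat_of_propEquiv_tt {φ : LTL Ap} (h : PropEquiv φ .tt) (w : Word Ap) : Sat φ w :=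
  (propSat_sat_iff w φ).1 ((h _ (litConsistent_sat w)).2 trivial)

lemma propEquiv_tt_and {φ ψ : LTL Ap} (hφ : PropEquiv φ .tt) (hψ : PropEquiv ψ .tt) :
    PropEquiv (.and φ ψ) .tt :=
  fun v hv => iff_true_intro ⟨(hφ v hv).2 trivial, (hψ v hv).2 trivial⟩

lemma propEquiv_tt_or_left {φ : LTL Ap} (ψ : LTL Ap) (hφ : PropEquiv φ .tt) :
    PropEquiv (.or φ ψ) .tt :=
  fun v hv => iff_true_intro (.inl ((hφ v hv).2 trivial))

lemma propEquiv_tt_or_right (φ : LTL Ap) {ψ : LTL Ap} (hψ : PropEquiv ψ .tt) :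
    PropEquiv (.or φ ψ) .tt :=
  fun v hv => iff_true_intro (.inr ((hψ v hv).2 trivial))

lemma afw_tt (u : List (Set Ap)) : afw .tt u = .tt := by
  induction u with
  | nil => rfl
  | cons _ _ ih => exact ih

lemma afw_and (φ ψ : LTL Ap) (u : List (Set Ap)) : afw (.and φ ψ) u = .and (afw φ u) (afw ψ u) := by
  induction u generalizing φ ψ with
  | nil => rfl
  | cons ν u ih => exact ih (af φ ν) (af ψ ν)

lemma afw_or (φ ψ : LTL Ap) (u : List (Set Ap)) : afw (.or φ ψ) u = .or (afw φ u) (afw ψ u) := by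
  induction u generalizing φ ψ with
  | nil => rfl
  | cons ν u ih => exact ih (af φ ν) (af ψ ν)

/-- The token of `M(φ)` placed at the start of `w` reaches `tt`. As `af` preserves tautologies, `∀ᶠ`
could be `∃` here; `∀ᶠ` makes conjunctions and shifting by one letter immediate. -/
def EventuallyTaut (φ : LTL Ap) (w : Word Ap) : Prop :=
  ∀ᶠ n in atTop, PropEquiv (afw φ (takeW w n)) .tt

lemma eventuallyTaut_af_iff {φ : LTL Ap} {w : Word Ap} :
    EventuallyTaut (af φ (w 0)) (suffix w 1) ↔ EventuallyTaut φ w := by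
  unfold EventuallyTaut
  conv_rhs => rw [← map_add_atTop_eq_nat 1]
  simp only [eventually_map, takeW_succ]
  rfl

lemma eventuallyTaut_tt (w : Word Ap) : EventuallyTaut .tt w :=
  .of_forall fun n => by rw [afw_tt]; exact fun _ _ => Iff.rfl

lemma EventuallyTaut.and {φ ψ : LTL Ap} {w : Word Ap} (hφ : EventuallyTaut φ w)
    (hψ : EventuallyTaut ψ w) : EventuallyTaut (.and φ ψ) w :=
  (Eventually.and hφ hψ).mono fun n h => by rw [afw_and]; exact propEquiv_tt_and h.1 h.2

lemma EventuallyTaut.or_left {φ : LTL Ap} (ψ : LTL Ap) {w : Word Ap} (hφ : EventuallyTaut φ w) :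
    EventuallyTaut (.or φ ψ) w :=
  hφ.mono fun n h => by rw [afw_or]; exact propEquiv_tt_or_left _ h

lemma EventuallyTaut.or_right (φ : LTL Ap) {ψ : LTL Ap} {w : Word Ap} (hψ : EventuallyTaut ψ w) :
    EventuallyTaut (.or φ ψ) w :=
  hψ.mono fun n h => by rw [afw_or]; exact propEquiv_tt_or_right _ h

lemma EventuallyTaut.fut_of_sat {φ : LTL Ap} (hφ : ∀ w, Sat φ w → EventuallyTaut φ w) {w : Word Ap}
    (h : Sat (.fut φ) w) : EventuallyTaut (.fut φ) w := by
  obtain ⟨k, hk⟩ := h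
  induction k generalizing w with
  | zero => exact eventuallyTaut_af_iff.1 (.or_left _ (eventuallyTaut_af_iff.2 (hφ w hk)))
  | succ k ih =>
    exact eventuallyTaut_af_iff.1 (.or_right _ (ih (by rwa [suffix_suffix])))

lemma EventuallyTaut.untl_of_sat {φ ψ : LTL Ap} (hφ : ∀ w, Sat φ w → EventuallyTaut φ w)
    (hψ : ∀ w, Sat ψ w → EventuallyTaut ψ w) {w : Word Ap} (h : Sat (.untl φ ψ) w) :
    EventuallyTaut (.untl φ ψ) w := by
  obtain ⟨k, hk, hlt⟩ := h
  induction k generalizing w with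
  | zero => exact eventuallyTaut_af_iff.1 (.or_left _ (eventuallyTaut_af_iff.2 (hψ w hk)))
  | succ k ih =>
    refine eventuallyTaut_af_iff.1 (.or_right _ (.and ?_ ?_))
    · exact eventuallyTaut_af_iff.2 (hφ w (hlt 0 k.succ_pos))
    · refine ih (by rwa [suffix_suffix]) fun j hj => ?_
      rw [suffix_suffix]
      exact hlt (j + 1) (Nat.succ_lt_succ hj)

lemma eventuallyTaut_of_sat {φ : LTL Ap} (hφ : GFree φ) {w : Word Ap} (h : Sat φ w) :
    EventuallyTaut φ w := by
  induction φ generalizing w with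
  | tt => exact eventuallyTaut_tt w
  | ff => exact h.elim
  | atom a =>
    rw [← eventuallyTaut_af_iff]
    simpa [af, show a ∈ w 0 from h] using eventuallyTaut_tt _
  | natom a =>
    rw [← eventuallyTaut_af_iff]
    simpa [af, show a ∉ w 0 from h] using eventuallyTaut_tt _
  | and φ ψ ihφ ihψ => exact (ihφ hφ.1 h.1).and (ihψ hφ.2 h.2)
  | or φ ψ ihφ ihψ =>
    exact h.elim (fun h => (ihφ hφ.1 h).or_left _) (fun h => (ihψ hφ.2 h).or_right _)
  | next φ ih => exact eventuallyTaut_af_iff.1 (ih hφ h)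
  | fut φ ih => exact .fut_of_sat (fun _ => ih hφ) h
  | glob => exact hφ.elim
  | untl φ ψ ihφ ihψ => exact .untl_of_sat (fun _ => ihφ hφ.1) (fun _ => ihψ hφ.2) h

lemma sat_suffix_iff_exists_propEquiv_tt {φ : LTL Ap} (hφ : GFree φ) (w : Word Ap) (i : ℕ) :
    Sat φ (suffix w i) ↔ ∃ j ≥ i, PropEquiv (afw φ (infixW w i j)) .tt := by
  simp only [infixW_eq_takeW]
  constructor
  · intro h
    obtain ⟨n, hn, htaut⟩ :=
      (Eventually.and (eventuallyTaut_of_sat hφ h) (eventually_ge_atTop 1)).exists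
    exact ⟨i + n - 1, by omega, by rwa [show i + n - 1 + 1 - i = n by omega]⟩
  · rintro ⟨j, -, htaut⟩
    exact (sat_afw_takeW_iff φ _ _).1 (sat_of_propEquiv_tt htaut _)

lemma sat_fut_glob_iff (φ : LTL Ap) (w : Word Ap) :
    Sat (.fut (.glob φ)) w ↔ ∃ N, ∀ i ≥ N, Sat φ (suffix w i) := by
  simp only [Sat, suffix_suffix]
  refine exists_congr fun N => ⟨fun h i hi => ?_, fun h m => h _ (Nat.le_add_left N m)⟩
  simpa [Nat.sub_add_cancel hi] using h (i - N)

/-- for `G`-free `φ`, `w ⊨ FGφ` iff for almost every `i` there is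
`j ≥ i` with `af(φ, w[i..j]) ≡_p tt`. -/
theorem gfree_FG_iff_tokens_succeed {Ap : Type} (φ : LTL Ap) (hφ : GFree φ) (w : Word Ap) :
    Sat (LTL.fut (LTL.glob φ)) w ↔
      ∃ N : ℕ, ∀ i ≥ N, ∃ j ≥ i, PropEquiv (afw φ (infixW w i j)) LTL.tt := by
  simp only [sat_fut_glob_iff, sat_suffix_iff_exists_propEquiv_tt hφ]

end LTLF
end

section
/- Let φ be an LTL formula and w an infinite word. Then w ⊨ FGφ if and only if there exists a set G of G-subformulas of φ such that: (1) for almost every i ∈ ℕ there exists j ≥ i with ⋀_{Gψ∈G} Gψ ⊨_p afG(φ, w[i..j]); and (2) w ⊨ FGψ for every Gψ ∈ G. -/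
/-!
If `w ⊨ FGφ`, let `G` collect the `G`-subformulas `ψ` of `φ` with `w ⊨ FGψ`. From some point on
every suffix satisfies `φ`, and a structural induction shows that once a suffix satisfies a formula
`ξ` whose `G`-subformulas that eventually hold all lie in `G`, the residue `afG(ξ, ·)` along every
long enough prefix of it is propositionally implied by `⋀_{ψ ∈ G} Gψ`.

Conversely, `G` is finite, so from some point on all `Gψ`, `ψ ∈ G`, hold. A valuation that makes
exactly these `G`-formulas true and evaluates all other atoms semantically on the remaining suffix
then satisfies `afG(φ, w[i..j])`, and unwinding `afG` letter by letter yields `w_i ⊨ φ`.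
-/

namespace LTLF

variable {Ap : Type}

open Filter

lemma suffix_suffix_s5 (x : Word Ap) (a b : ℕ) : suffix (suffix x a) b = suffix x (a + b) := by
  funext i
  simp only [suffix]
  congr 1
  omega

lemma sat_glob_suffix {ψ : LTL Ap} {x : Word Ap} (h : Sat (.glob ψ) x) (k : ℕ) :
    Sat (.glob ψ) (suffix x k) := fun m => by
  rw [suffix_suffix_s5]
  exact h (k + m)

lemma sat_fut_glob_iff_eventually {ψ : LTL Ap} {w : Word Ap} :
    Sat (.fut (.glob ψ)) w ↔ ∀ᶠ k in atTop, Sat ψ (suffix w k) := by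
  rw [eventually_atTop]
  constructor
  · rintro ⟨k, hk⟩
    refine ⟨k, fun i hi => ?_⟩
    have := hk (i - k)
    rwa [suffix_suffix_s5, Nat.add_sub_cancel' hi] at this
  · rintro ⟨k, hk⟩
    exact ⟨k, fun m => by rw [suffix_suffix_s5]; exact hk _ (Nat.le_add_right k m)⟩

lemma eventually_sat_glob_of_sat_fut_glob {ψ : LTL Ap} {w : Word Ap}
    (h : Sat (.fut (.glob ψ)) w) : ∀ᶠ k in atTop, Sat (.glob ψ) (suffix w k) := by
  filter_upwards [eventually_forall_ge_atTop.2 (sat_fut_glob_iff_eventually.1 h)] with k hk m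
  rw [suffix_suffix_s5]
  exact hk _ (Nat.le_add_right k m)

lemma prefixW_succ (x : Word Ap) (n : ℕ) :
    prefixW x (n + 1) = x 0 :: prefixW (suffix x 1) n := by
  rw [prefixW, infixW, Nat.sub_zero, List.range_succ_eq_map, List.map_cons, List.map_map]
  rfl

lemma infixW_add (w : Word Ap) (i n : ℕ) : infixW w i (i + n) = prefixW (suffix w i) n := by
  simp only [prefixW, infixW, suffix, Nat.sub_zero, show i + n + 1 - i = n + 1 by omega]
  congr 1
  funext k
  congr 1
  omega

lemma afGw_and (α β : LTL Ap) (u : List (Set Ap)) :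
    afGw (.and α β) u = .and (afGw α u) (afGw β u) := by
  induction u generalizing α β with
  | nil => rfl
  | cons ν u ih => exact ih _ _

lemma afGw_or (α β : LTL Ap) (u : List (Set Ap)) :
    afGw (.or α β) u = .or (afGw α u) (afGw β u) := by
  induction u generalizing α β with
  | nil => rfl
  | cons ν u ih => exact ih _ _

lemma afGw_eq_self {ξ : LTL Ap} (h : ∀ ν, afG ξ ν = ξ) (u : List (Set Ap)) : afGw ξ u = ξ := by
  induction u with
  | nil => rfl
  | cons ν u ih => simpa only [afGw, List.foldl_cons, h] using ih

lemma finite_setOf_gSub (φ : LTL Ap) : {ψ | GSub φ ψ}.Finite :=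
  (List.finite_toSet (subfs φ)).preimage fun _ _ _ _ h => LTL.glob.inj h

section Soundness

def gVal (G : Set (LTL Ap)) (x : Word Ap) : LTL Ap → Prop
  | .glob χ => χ ∈ G
  | η => Sat η x

lemma litConsistent_gVal (G : Set (LTL Ap)) (x : Word Ap) : LitConsistent (gVal G x) :=
  fun a => (not_not (a := a ∈ x 0)).symm

variable {G : Set (LTL Ap)}

lemma propSat_gVal_of_mem_image_glob (x : Word Ap) :
    ∀ χ ∈ LTL.glob '' G, propSat (gVal G x) χ := by
  rintro _ ⟨ψ, hψ, rfl⟩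
  exact hψ

lemma sat_of_propSat_gVal {x : Word Ap} (hG : ∀ χ ∈ G, Sat (.glob χ) x) :
    ∀ {ξ : LTL Ap}, propSat (gVal G x) ξ → Sat ξ x
  | .tt, _ => trivial
  | .and _ _, h => ⟨sat_of_propSat_gVal hG h.1, sat_of_propSat_gVal hG h.2⟩
  | .or _ _, h => h.imp (sat_of_propSat_gVal hG) (sat_of_propSat_gVal hG)
  | .glob _, h => hG _ h
  | .atom _, h | .natom _, h | .next _, h | .fut _, h | .untl _ _, h => h

lemma propSat_gVal_of_afG {x : Word Ap} (hG : ∀ χ ∈ G, Sat (.glob χ) x) :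
    ∀ {ξ : LTL Ap}, propSat (gVal G (suffix x 1)) (afG ξ (x 0)) → propSat (gVal G x) ξ := by
  intro ξ
  induction ξ with
  | tt | glob _ _ => exact id
  | ff => exact False.elim
  | atom a =>
    by_cases ha : a ∈ x 0 <;> simp [afG, ha, propSat, gVal, Sat]
  | natom a =>
    by_cases ha : a ∈ x 0 <;> simp [afG, ha, propSat, gVal, Sat]
  | and α β ihα ihβ => exact fun h => ⟨ihα h.1, ihβ h.2⟩
  | or α β ihα ihβ => exact fun h => h.imp ihα ihβ
  | next α _ => exact sat_of_propSat_gVal fun χ hχ => sat_glob_suffix (hG χ hχ) 1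
  | fut α ihα =>
    rintro (h | ⟨k, hk⟩)
    · exact ⟨0, sat_of_propSat_gVal hG (ihα h)⟩
    · exact ⟨1 + k, by rwa [suffix_suffix_s5] at hk⟩
  | untl α β ihα ihβ =>
    rintro (h | ⟨hα, k, hkβ, hkα⟩)
    · exact ⟨0, sat_of_propSat_gVal hG (ihβ h), fun _ hj => absurd hj (Nat.not_lt_zero _)⟩
    refine ⟨1 + k, by rwa [suffix_suffix_s5] at hkβ, fun j hj => ?_⟩
    rcases j with _ | j
    · exact sat_of_propSat_gVal hG (ihα hα)
    · have := hkα j (by omega)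
      rwa [suffix_suffix_s5, Nat.add_comm] at this

lemma propSat_gVal_of_afGw_prefixW {x : Word Ap} {ξ : LTL Ap} {n : ℕ}
    (hG : ∀ χ ∈ G, Sat (.glob χ) x)
    (h : propSat (gVal G (suffix x (n + 1))) (afGw ξ (prefixW x n))) :
    propSat (gVal G x) ξ := by
  induction n generalizing x ξ with
  | zero => exact propSat_gVal_of_afG hG h
  | succ n ih =>
    refine propSat_gVal_of_afG hG (ih (fun χ hχ => sat_glob_suffix (hG χ hχ) 1) ?_)
    rw [suffix_suffix_s5, Nat.add_comm 1]
    rwa [prefixW_succ] at h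

lemma sat_of_propImpSet_afGw_prefixW {x : Word Ap} {ξ : LTL Ap} {n : ℕ}
    (hG : ∀ χ ∈ G, Sat (.glob χ) x) (h : PropImpSet (LTL.glob '' G) (afGw ξ (prefixW x n))) :
    Sat ξ x :=
  sat_of_propSat_gVal hG <| propSat_gVal_of_afGw_prefixW hG <|
    h _ (litConsistent_gVal G _) (propSat_gVal_of_mem_image_glob _)

end Soundness

section Completeness

def EventuallyImplied (G : Set (LTL Ap)) (ξ : LTL Ap) (x : Word Ap) : Prop :=
  ∀ᶠ n in atTop, PropImpSet (LTL.glob '' G) (afGw ξ (prefixW x n))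

variable {G : Set (LTL Ap)} {α β ξ : LTL Ap} {x : Word Ap}

lemma eventuallyImplied_iff_afG :
    EventuallyImplied G ξ x ↔ EventuallyImplied G (afG ξ (x 0)) (suffix x 1) := by
  rw [EventuallyImplied, ← map_add_atTop_eq_nat 1, eventually_map]
  simp only [prefixW_succ]
  rfl

lemma EventuallyImplied.or_left (h : EventuallyImplied G α x) :
    EventuallyImplied G (.or α β) x := by
  filter_upwards [h] with n hn v hv hG
  rw [afGw_or]
  exact Or.inl (hn v hv hG)

lemma EventuallyImplied.or_right (h : EventuallyImplied G β x) :
    EventuallyImplied G (.or α β) x := by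
  filter_upwards [h] with n hn v hv hG
  rw [afGw_or]
  exact Or.inr (hn v hv hG)

lemma EventuallyImplied.and (hα : EventuallyImplied G α x) (hβ : EventuallyImplied G β x) :
    EventuallyImplied G (.and α β) x := by
  filter_upwards [hα, hβ] with n hnα hnβ v hv hG
  rw [afGw_and]
  exact ⟨hnα v hv hG, hnβ v hv hG⟩

lemma eventuallyImplied_of_afG_eq_self (hξ : ∀ ν, afG ξ ν = ξ)
    (h : PropImpSet (LTL.glob '' G) ξ) : EventuallyImplied G ξ x :=
  Eventually.of_forall fun n => by rwa [afGw_eq_self hξ]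

lemma eventuallyImplied_tt : EventuallyImplied G .tt x :=
  eventuallyImplied_of_afG_eq_self (fun _ => rfl) fun _ _ _ => trivial

lemma eventuallyImplied_of_sat {w : Word Ap} {i : ℕ} (hsat : Sat ξ (suffix w i))
    (hG : ∀ χ, GSub ξ χ → Sat (.fut (.glob χ)) w → χ ∈ G) :
    EventuallyImplied G ξ (suffix w i) := by
  induction ξ generalizing i with
  | tt => exact eventuallyImplied_tt
  | ff => exact hsat.elim
  | atom a =>
    rw [eventuallyImplied_iff_afG, show afG (.atom a) (suffix w i 0) = .tt from if_pos hsat]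
    exact eventuallyImplied_tt
  | natom a =>
    rw [eventuallyImplied_iff_afG, show afG (.natom a) (suffix w i 0) = .tt from if_neg hsat]
    exact eventuallyImplied_tt
  | and α β ihα ihβ =>
    exact (ihα hsat.1 fun χ hχ => hG χ (by simp_all [GSub, subfs])).and
      (ihβ hsat.2 fun χ hχ => hG χ (by simp_all [GSub, subfs]))
  | or α β ihα ihβ =>
    rcases hsat with hsat | hsat
    · exact (ihα hsat fun χ hχ => hG χ (by simp_all [GSub, subfs])).or_left
    · exact (ihβ hsat fun χ hχ => hG χ (by simp_all [GSub, subfs])).or_right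
  | next α ihα =>
    rw [eventuallyImplied_iff_afG, suffix_suffix_s5]
    rw [Sat, suffix_suffix_s5] at hsat
    exact ihα hsat fun χ hχ => hG χ (List.mem_cons_of_mem _ hχ)
  | fut α ihα =>
    obtain ⟨k, hk⟩ := hsat
    induction k generalizing i with
    | zero =>
      rw [eventuallyImplied_iff_afG]
      exact (eventuallyImplied_iff_afG.1 (ihα hk fun χ hχ =>
        hG χ (List.mem_cons_of_mem _ hχ))).or_left
    | succ k ihk =>
      rw [eventuallyImplied_iff_afG, suffix_suffix_s5]
      refine (ihk ?_).or_right
      rw [suffix_suffix_s5] at hk ⊢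
      convert hk using 2
      omega
  | glob α _ =>
    have hα : α ∈ G := hG α List.mem_cons_self ⟨i, hsat⟩
    exact eventuallyImplied_of_afG_eq_self (fun _ => rfl) fun v _ hH => hH _ ⟨α, hα, rfl⟩
  | untl α β ihα ihβ =>
    obtain ⟨k, hkβ, hkα⟩ := hsat
    induction k generalizing i with
    | zero =>
      rw [eventuallyImplied_iff_afG]
      exact (eventuallyImplied_iff_afG.1 (ihβ hkβ fun χ hχ =>
        hG χ (by simp_all [GSub, subfs]))).or_left
    | succ k ihk =>
      rw [eventuallyImplied_iff_afG]
      refine .or_right (.and (eventuallyImplied_iff_afG.1 (ihα (hkα 0 k.succ_pos) fun χ hχ =>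
        hG χ (by simp_all [GSub, subfs]))) ?_)
      rw [suffix_suffix_s5]
      refine ihk ?_ fun j hj => ?_
      · rw [suffix_suffix_s5] at hkβ ⊢
        convert hkβ using 2
        omega
      · have := hkα (1 + j) (by omega)
        rw [suffix_suffix_s5] at this ⊢
        convert this using 2
        omega

end Completeness

/-- `w ⊨ FGφ` iff there is a set `G` of `G`-subformulas of `φ`
such that (1) the Mojmir automaton `M(φ, G)` accepts `w` and
(2) `w ⊨ FGψ` for every `Gψ ∈ G`. -/
theorem FG_iff_slave_accepts {Ap : Type} (φ : LTL Ap) (w : Word Ap) :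
    Sat (LTL.fut (LTL.glob φ)) w ↔
      ∃ G : Set (LTL Ap), (∀ ψ ∈ G, GSub φ ψ) ∧
        (∃ N : ℕ, ∀ i ≥ N, ∃ j ≥ i,
          PropImpSet (LTL.glob '' G) (afGw φ (infixW w i j))) ∧
        (∀ ψ ∈ G, Sat (LTL.fut (LTL.glob ψ)) w) := by
  simp only [← eventually_atTop]
  constructor
  · intro h
    refine ⟨{ψ | GSub φ ψ ∧ Sat (.fut (.glob ψ)) w}, fun ψ hψ => hψ.1, ?_, fun ψ hψ => hψ.2⟩
    filter_upwards [sat_fut_glob_iff_eventually.1 h] with i hi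
    have hev : EventuallyImplied {ψ | GSub φ ψ ∧ Sat (.fut (.glob ψ)) w} φ (suffix w i) :=
      eventuallyImplied_of_sat hi fun _ => And.intro
    obtain ⟨n, hn⟩ := hev.exists
    exact ⟨i + n, Nat.le_add_right i n, by rwa [infixW_add]⟩
  · rintro ⟨G, hGsub, hacc, hFG⟩
    have hGglob : ∀ᶠ k in atTop, ∀ χ ∈ G, Sat (.glob χ) (suffix w k) :=
      ((finite_setOf_gSub φ).subset hGsub).eventually_all.2 fun χ hχ =>
        eventually_sat_glob_of_sat_fut_glob (hFG χ hχ)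
    rw [sat_fut_glob_iff_eventually]
    filter_upwards [hacc, hGglob] with i hi hGi
    obtain ⟨j, hij, himp⟩ := hi
    obtain ⟨n, rfl⟩ := Nat.exists_eq_add_of_le hij
    rw [infixW_add] at himp
    exact sat_of_propImpSet_afGw_prefixW hGi himp

end LTLF
end

section
/- Let φ be an LTL formula in negation normal form over a finite set Ap of atomic propositions. Then the set ReachG(φ) = { afG(φ, w) : w ∈ (2^Ap)* }, taken up to propositional equivalence, is finite. -/
namespace LTLF

variable {Ap : Type}

theorem propEquiv_refl {Ap : Type} (φ : LTL Ap) : PropEquiv φ φ :=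
  fun _ _ => Iff.rfl

theorem propEquiv_symm {Ap : Type} {φ ψ : LTL Ap} (h : PropEquiv φ ψ) :
    PropEquiv ψ φ := fun v hv => (h v hv).symm

theorem propEquiv_trans {Ap : Type} {φ ψ χ : LTL Ap}
    (h1 : PropEquiv φ ψ) (h2 : PropEquiv ψ χ) : PropEquiv φ χ :=
  fun v hv => (h1 v hv).trans (h2 v hv)

/-- Propositional equivalence as a setoid on formulas. -/
def propSetoid (Ap : Type) : Setoid (LTL Ap) :=
  ⟨PropEquiv, ⟨propEquiv_refl, propEquiv_symm, propEquiv_trans⟩⟩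

/-!
Every formula reachable from `φ` under `afG` is a positive Boolean combination of propositional
atoms taken from the finite set of subformulas of `φ` together with `tt` and `ff`: one step of
`afG` replaces literals by `tt`/`ff`, keeps `Gψ`, and rewrites `Xψ`, `Fψ`, `ψ₁ U ψ₂` into Boolean
combinations of themselves and their own subformulas. Up to `≡_p` such a formula is determined
by which restrictions of literal-consistent valuations to that finite set satisfy it, and there
are only finitely many such sets of restrictions.
-/

def propAtoms : LTL Ap → List (LTL Ap)
  | .and φ ψ => propAtoms φ ++ propAtoms ψ
  | .or φ ψ => propAtoms φ ++ propAtoms ψ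
  | φ => [φ]

lemma propSat_congr {v v' : LTL Ap → Prop} {ψ : LTL Ap}
    (h : ∀ x ∈ propAtoms ψ, v x ↔ v' x) : propSat v ψ ↔ propSat v' ψ := by
  induction ψ with
  | and φ ψ ih₁ ih₂ | or φ ψ ih₁ ih₂ =>
    simp only [propAtoms, List.mem_append] at h
    simp only [propSat, ih₁ fun x hx => h x (.inl hx), ih₂ fun x hx => h x (.inr hx)]
  | tt | ff => exact Iff.rfl
  | _ => simpa only [propAtoms, propSat, List.mem_singleton, forall_eq] using h

lemma mem_subfs_self (ψ : LTL Ap) : ψ ∈ subfs ψ := by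
  cases ψ <;> simp [subfs]

lemma mem_subfs_trans {φ ψ χ : LTL Ap} (hψ : ψ ∈ subfs φ) (hχ : χ ∈ subfs ψ) :
    χ ∈ subfs φ := by
  induction φ generalizing ψ with
  | and φ₁ φ₂ ih₁ ih₂ | or φ₁ φ₂ ih₁ ih₂ | untl φ₁ φ₂ ih₁ ih₂ =>
    simp only [subfs, List.mem_cons, List.mem_append] at hψ ⊢
    rcases hψ with rfl | h | h
    · simpa only [subfs, List.mem_cons, List.mem_append] using hχ
    · exact .inr (.inl (ih₁ h hχ))
    · exact .inr (.inr (ih₂ h hχ))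
  | next φ ih | fut φ ih | glob φ ih =>
    simp only [subfs, List.mem_cons] at hψ ⊢
    rcases hψ with rfl | h
    · simpa only [subfs, List.mem_cons] using hχ
    · exact .inr (ih h hχ)
  | _ => simp only [subfs, List.mem_singleton] at hψ; exact hψ ▸ hχ

lemma mem_subfs_of_mem_propAtoms {ψ x : LTL Ap} (hx : x ∈ propAtoms ψ) : x ∈ subfs ψ := by
  induction ψ with
  | and φ ψ ih₁ ih₂ | or φ ψ ih₁ ih₂ =>
    simp only [propAtoms, List.mem_append] at hx
    simp only [subfs, List.mem_cons, List.mem_append]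
    tauto
  | _ => simp only [propAtoms, List.mem_singleton] at hx; exact hx ▸ mem_subfs_self _

def subfClosure (φ : LTL Ap) : Set (LTL Ap) := {ψ | ψ ∈ LTL.tt :: LTL.ff :: subfs φ}

lemma finite_subfClosure (φ : LTL Ap) : (subfClosure φ).Finite :=
  List.finite_toSet _

lemma mem_subfClosure_of_mem_subfs {φ χ ψ : LTL Ap} (hχ : χ ∈ subfClosure φ)
    (hψ : ψ ∈ subfs χ) : ψ ∈ subfClosure φ := by
  simp only [subfClosure, Set.mem_ofPred_eq, List.mem_cons] at hχ ⊢
  rcases hχ with rfl | rfl | hχ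
  · simp_all [subfs]
  · simp_all [subfs]
  · exact .inr (.inr (mem_subfs_trans hχ hψ))

lemma propAtoms_subset_subfClosure {φ χ : LTL Ap} (hχ : χ ∈ subfClosure φ) :
    ∀ x ∈ propAtoms χ, x ∈ subfClosure φ :=
  fun _ hx => mem_subfClosure_of_mem_subfs hχ (mem_subfs_of_mem_propAtoms hx)

lemma propAtoms_afG_subset {φ ψ : LTL Ap} (h : ∀ x ∈ propAtoms ψ, x ∈ subfClosure φ)
    (ν : Set Ap) : ∀ x ∈ propAtoms (afG ψ ν), x ∈ subfClosure φ := by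
  have htt : LTL.tt ∈ subfClosure φ := by simp [subfClosure]
  have hff : LTL.ff ∈ subfClosure φ := by simp [subfClosure]
  induction ψ with
  | tt | ff => exact h
  | atom | natom =>
    simp only [afG]
    split_ifs <;> simpa [propAtoms]
  | and χ₁ χ₂ ih₁ ih₂ | or χ₁ χ₂ ih₁ ih₂ =>
    simp only [propAtoms, List.mem_append] at h
    simp only [afG, propAtoms, List.mem_append]
    rintro x (hx | hx)
    exacts [ih₁ (fun y hy => h y (.inl hy)) x hx, ih₂ (fun y hy => h y (.inr hy)) x hx]
  | next χ =>
    have hnext := h (.next χ) (by simp [propAtoms])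
    exact propAtoms_subset_subfClosure
      (mem_subfClosure_of_mem_subfs (ψ := χ) hnext (by simp [subfs, mem_subfs_self]))
  | fut χ ih =>
    have hfut := h (.fut χ) (by simp [propAtoms])
    have hχ := mem_subfClosure_of_mem_subfs (ψ := χ) hfut (by simp [subfs, mem_subfs_self])
    simp only [afG, propAtoms, List.mem_append, List.mem_singleton]
    rintro x (hx | rfl)
    exacts [ih (propAtoms_subset_subfClosure hχ) x hx, hfut]
  | glob χ => exact h
  | untl χ₁ χ₂ ih₁ ih₂ =>
    have huntl := h (.untl χ₁ χ₂) (by simp [propAtoms])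
    have hχ₁ := mem_subfClosure_of_mem_subfs (ψ := χ₁) huntl (by simp [subfs, mem_subfs_self])
    have hχ₂ := mem_subfClosure_of_mem_subfs (ψ := χ₂) huntl (by simp [subfs, mem_subfs_self])
    simp only [afG, propAtoms, List.mem_append, List.mem_singleton]
    rintro x (hx | hx | rfl)
    exacts [ih₂ (propAtoms_subset_subfClosure hχ₂) x hx,
      ih₁ (propAtoms_subset_subfClosure hχ₁) x hx, huntl]

lemma propAtoms_afGw_subset (φ : LTL Ap) (u : List (Set Ap)) :
    ∀ x ∈ propAtoms (afGw φ u), x ∈ subfClosure φ := by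
  suffices ∀ ψ, (∀ x ∈ propAtoms ψ, x ∈ subfClosure φ) →
      ∀ x ∈ propAtoms (u.foldl afG ψ), x ∈ subfClosure φ from
    this φ (propAtoms_subset_subfClosure (by simp [subfClosure, mem_subfs_self]))
  induction u with
  | nil => exact fun _ h => h
  | cons ν u ih => exact fun ψ h => ih _ (propAtoms_afG_subset h ν)

def truthTable (S : Set (LTL Ap)) (ψ : LTL Ap) : Set (S → Prop) :=
  {f | ∃ v, LitConsistent v ∧ (∀ s : S, f s ↔ v s) ∧ propSat v ψ}

lemma truthTable_eq_of_propEquiv (S : Set (LTL Ap)) {ψ χ : LTL Ap} (h : PropEquiv ψ χ) :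
    truthTable S ψ = truthTable S χ := by
  ext f
  exact exists_congr fun v => and_congr_right fun hv => and_congr_right fun _ => h v hv

lemma restrict_mem_truthTable_iff {S : Set (LTL Ap)} {ψ : LTL Ap}
    (hψ : ∀ x ∈ propAtoms ψ, x ∈ S) {v : LTL Ap → Prop} (hv : LitConsistent v) :
    (fun s : S => v s) ∈ truthTable S ψ ↔ propSat v ψ := by
  refine ⟨fun ⟨v', _, hvv', hψv'⟩ => ?_, fun h => ⟨v, hv, fun _ => Iff.rfl, h⟩⟩
  exact (propSat_congr fun x hx => hvv' ⟨x, hψ x hx⟩).2 hψv'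

lemma propEquiv_of_truthTable_eq {S : Set (LTL Ap)} {ψ χ : LTL Ap}
    (hψ : ∀ x ∈ propAtoms ψ, x ∈ S) (hχ : ∀ x ∈ propAtoms χ, x ∈ S)
    (h : truthTable S ψ = truthTable S χ) : PropEquiv ψ χ := fun v hv => by
  rw [← restrict_mem_truthTable_iff hψ hv, ← restrict_mem_truthTable_iff hχ hv, h]

lemma finite_range_propClass {ι : Type*} {S : Set (LTL Ap)} (hS : S.Finite) (f : ι → LTL Ap)
    (hf : ∀ i, ∀ x ∈ propAtoms (f i), x ∈ S) :
    (Set.range fun i => Quotient.mk (propSetoid Ap) (f i)).Finite := by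
  have : Finite S := hS.to_subtype
  let table : Quotient (propSetoid Ap) → Set (S → Prop) :=
    Quotient.lift (truthTable S) fun _ _ => truthTable_eq_of_propEquiv S
  refine Set.Finite.of_finite_image (f := table) (Set.toFinite _) ?_
  rintro _ ⟨i, rfl⟩ _ ⟨j, rfl⟩ hij
  exact Quotient.sound (propEquiv_of_truthTable_eq (hf i) (hf j) hij)

theorem reachG_finite_general {Ap : Type} (φ : LTL Ap) :
    Set.Finite (Set.range fun u : List (Set Ap) =>
      Quotient.mk (propSetoid Ap) (afGw φ u)) :=
  finite_range_propClass (finite_subfClosure φ) _ (propAtoms_afGw_subset φ)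

/-- `ReachG(φ) = { afG(φ, u) | u finite word }` is finite up to
propositional equivalence. -/
theorem reachG_finite {Ap : Type} [Fintype Ap] (φ : LTL Ap) :
    Set.Finite (Set.range fun u : List (Set Ap) =>
      Quotient.mk (propSetoid Ap) (afGw φ u)) :=
  reachG_finite_general φ

end LTLF
end

section
/- If φ and ψ are propositionally equivalent LTL formulas, then for every letter ν ∈ 2^Ap, af(φ,ν) and af(ψ,ν) are propositionally equivalent. Consequently af is well-defined on propositional-equivalence classes of formulas. -/
/-! `af · ν` commutes with `∧` and `∨` and rewrites only the propositional atoms, so it acts as a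
substitution: `af φ ν` holds under `v` iff `φ` holds under the valuation `χ ↦ v ⊨ af χ ν`. That
valuation is consistent on literals for every `v`, because `af a ν` and `af ¬a ν` are `tt` and `ff`
in some order. -/

namespace LTLF

variable {Ap : Type}

def afValuation (v : LTL Ap → Prop) (ν : Set Ap) : LTL Ap → Prop :=
  fun χ => propSat v (af χ ν)

theorem propSat_af (v : LTL Ap → Prop) (ν : Set Ap) (φ : LTL Ap) :
    propSat v (af φ ν) ↔ propSat (afValuation v ν) φ := by
  induction φ with
  | and φ ψ ih₁ ih₂ => simp only [af, propSat, ih₁, ih₂]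
  | or φ ψ ih₁ ih₂ => simp only [af, propSat, ih₁, ih₂]
  | _ => rfl

theorem litConsistent_afValuation (v : LTL Ap → Prop) (ν : Set Ap) :
    LitConsistent (afValuation v ν) := by
  intro a
  by_cases ha : a ∈ ν <;> simp [afValuation, af, propSat, ha]

/-- `af` is well-defined on propositional-equivalence classes. -/
theorem af_respects_propEquiv {Ap : Type} (φ ψ : LTL Ap) (h : PropEquiv φ ψ)
    (ν : Set Ap) : PropEquiv (af φ ν) (af ψ ν) := by
  intro v _
  rw [propSat_af, propSat_af]
  exact h _ (litConsistent_afValuation v ν)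

end LTLF
end
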